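/- Let H be a bialgebra over a field k and F ∈ H ⊗ H an invertible element satisfying the cocycle condition (F ⊗ 1)·((Δ ⊗ id)F) = (1 ⊗ F)·((id ⊗ Δ)F) in H ⊗ H ⊗ H. Define the twisted comultiplication Δ_F : H → H ⊗ H by Δ_F(x) := F · Δ(x) · F⁻¹ (product taken in the algebra H ⊗ H). Then Δ_F is coassociative: (Δ_F ⊗ id)(Δ_F(x)) = (id ⊗ Δ_F)(Δ_F(x)) in H ⊗ H ⊗ H for every x ∈ H. -/

import Mathlib

open TensorProduct

noncomputable section

variable {k H : Type*} [Field k] [Ring H] [Bialgebra k H]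

/-- The twisted comultiplication `Δ_F(x) = F · Δ(x) · F⁻¹`. -/
def DeltaF (F Finv : H ⊗[k] H) : H →ₗ[k] H ⊗[k] H :=
  LinearMap.mulLeft k F ∘ₗ LinearMap.mulRight k Finv ∘ₗ Coalgebra.comul

/-!
Since `Δ ⊗ id` is an algebra map, `Δ_F ⊗ id` is `Δ ⊗ id` conjugated by `F ⊗ 1`; hence
`(Δ_F ⊗ id) ∘ Δ_F` is `(Δ ⊗ id) ∘ Δ` conjugated by `Φ = (F ⊗ 1) · (Δ ⊗ id) F`, and likewise
`(id ⊗ Δ_F) ∘ Δ_F` is `(id ⊗ Δ) ∘ Δ` conjugated by `Ψ = (1 ⊗ F) · (id ⊗ Δ) F`. Coassociativity of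
`Δ` identifies the middle factors, the cocycle condition says `Φ = Ψ` up to reassociation, and then
the inverses of `Φ` and `Ψ` agree as well.
-/

section ConjugatedAlgHom

variable {R A B C : Type*} [CommSemiring R] [Semiring A] [Semiring B] [Semiring C]
  [Algebra R A] [Algebra R B] [Algebra R C]

theorem TensorProduct.map_mulLeft_mulRight_comp_id_apply (g : A →ₐ[R] B) (b b' : B)
    (y : A ⊗[R] C) :
    TensorProduct.map (LinearMap.mulLeft R b ∘ₗ LinearMap.mulRight R b' ∘ₗ g.toLinearMap)
        LinearMap.id y =
      (b ⊗ₜ 1) * Algebra.TensorProduct.map g (AlgHom.id R C) y * (b' ⊗ₜ 1) := by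
  induction y using TensorProduct.induction_on with
  | zero => simp
  | tmul a c => simp [Algebra.TensorProduct.tmul_mul_tmul, mul_assoc]
  | add y z hy hz => simp only [map_add, hy, hz, mul_add, add_mul]

theorem TensorProduct.map_id_mulLeft_mulRight_comp_apply (g : A →ₐ[R] B) (b b' : B)
    (y : C ⊗[R] A) :
    TensorProduct.map LinearMap.id
        (LinearMap.mulLeft R b ∘ₗ LinearMap.mulRight R b' ∘ₗ g.toLinearMap) y =
      (1 ⊗ₜ b) * Algebra.TensorProduct.map (AlgHom.id R C) g y * (1 ⊗ₜ b') := by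
  induction y using TensorProduct.induction_on with
  | zero => simp
  | tmul c a => simp [Algebra.TensorProduct.tmul_mul_tmul, mul_assoc]
  | add y z hy hz => simp only [map_add, hy, hz, mul_add, add_mul]

end ConjugatedAlgHom

def comulRTensorAlgHom : H ⊗[k] H →ₐ[k] (H ⊗[k] H) ⊗[k] H :=
  Algebra.TensorProduct.map (Bialgebra.comulAlgHom k H) (AlgHom.id k H)

def comulLTensorAlgHom : H ⊗[k] H →ₐ[k] H ⊗[k] (H ⊗[k] H) :=
  Algebra.TensorProduct.map (AlgHom.id k H) (Bialgebra.comulAlgHom k H)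

theorem DeltaF_apply (F Finv : H ⊗[k] H) (x : H) :
    DeltaF F Finv x = F * Coalgebra.comul x * Finv := by
  simp [DeltaF, mul_assoc]

theorem map_DeltaF_id_DeltaF (F Finv : H ⊗[k] H) (x : H) :
    TensorProduct.map (DeltaF F Finv) LinearMap.id (DeltaF F Finv x) =
      ((F ⊗ₜ 1) * comulRTensorAlgHom F) * comulRTensorAlgHom (Coalgebra.comul x) *
        (comulRTensorAlgHom Finv * (Finv ⊗ₜ 1)) := by
  rw [DeltaF_apply, DeltaF, ← Bialgebra.toLinearMap_comulAlgHom,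
    TensorProduct.map_mulLeft_mulRight_comp_id_apply, map_mul, map_mul]
  simp only [comulRTensorAlgHom, mul_assoc]

theorem map_id_DeltaF_DeltaF (F Finv : H ⊗[k] H) (x : H) :
    TensorProduct.map LinearMap.id (DeltaF F Finv) (DeltaF F Finv x) =
      ((1 ⊗ₜ F) * comulLTensorAlgHom F) * comulLTensorAlgHom (Coalgebra.comul x) *
        (comulLTensorAlgHom Finv * (1 ⊗ₜ Finv)) := by
  rw [DeltaF_apply, DeltaF, ← Bialgebra.toLinearMap_comulAlgHom,
    TensorProduct.map_id_mulLeft_mulRight_comp_apply, map_mul, map_mul]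
  simp only [comulLTensorAlgHom, mul_assoc]

/-- if `F` is an invertible twist satisfying the cocycle condition, then the
twisted comultiplication `Δ_F = F Δ(·) F⁻¹` is coassociative. -/
theorem DeltaF_coassoc (F Finv : H ⊗[k] H) (hF : F * Finv = 1) (hF' : Finv * F = 1)
    (hcocycle :
      ((F ⊗ₜ[k] (1 : H)) * TensorProduct.map Coalgebra.comul LinearMap.id F) =
        (Algebra.TensorProduct.assoc k k k H H H).symm
          (((1 : H) ⊗ₜ[k] F) * TensorProduct.map LinearMap.id Coalgebra.comul F))
    (x : H) :
    TensorProduct.map (DeltaF F Finv) LinearMap.id (DeltaF F Finv x) =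
      (Algebra.TensorProduct.assoc k k k H H H).symm
        (TensorProduct.map LinearMap.id (DeltaF F Finv) (DeltaF F Finv x)) := by
  set G₁ : H ⊗[k] H →ₐ[k] (H ⊗[k] H) ⊗[k] H := comulRTensorAlgHom
  set G₂ : H ⊗[k] H →ₐ[k] H ⊗[k] (H ⊗[k] H) := comulLTensorAlgHom
  set E := (Algebra.TensorProduct.assoc k k k H H H).symm
  have hcoc : (F ⊗ₜ 1) * G₁ F = E ((1 ⊗ₜ F) * G₂ F) := hcocycle
  have hcoassoc : E (G₂ (Coalgebra.comul x)) = G₁ (Coalgebra.comul x) :=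
    Coalgebra.coassoc_symm_apply x
  have hΦ : (G₁ Finv * (Finv ⊗ₜ 1)) * ((F ⊗ₜ 1) * G₁ F) = 1 := by
    rw [mul_assoc, ← mul_assoc (Finv ⊗ₜ 1), Algebra.TensorProduct.tmul_mul_tmul, hF', one_mul,
      ← Algebra.TensorProduct.one_def, one_mul, ← map_mul, hF', map_one]
  have hΨ : ((1 ⊗ₜ F) * G₂ F) * (G₂ Finv * (1 ⊗ₜ Finv)) = 1 := by
    rw [mul_assoc, ← mul_assoc (G₂ F), ← map_mul, hF, map_one, one_mul,
      Algebra.TensorProduct.tmul_mul_tmul, hF, one_mul, ← Algebra.TensorProduct.one_def]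
  have hinv : E (G₂ Finv * (1 ⊗ₜ Finv)) = G₁ Finv * (Finv ⊗ₜ 1) :=
    (left_inv_eq_right_inv hΦ (by rw [hcoc, ← map_mul, hΨ, map_one])).symm
  rw [map_DeltaF_id_DeltaF, map_id_DeltaF_DeltaF, map_mul, map_mul, hinv, hcoassoc, ← hcoc]

end
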